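/- Let α ∈ (1/2, 1) and T ≥ 2, and let d, d' be positive reals with d ≥ d'. Then the sum over pairs of integers (m, n) with 1 ≤ m, n ≤ T satisfying |log(m·d/(n·d'))| > 1/(2T^(1−α)) of 1/(m^α·n^α·|log(m·d/(n·d'))|) is O(T^(2−2α)·log T), with implied constant depending only on α. -/

import Mathlib

-- Bernoulli via AM-GM: (1-u)^p ≤ 1 - p*u for u,p in [0,1]
lemma bern (p u : ℝ) (hp0 : 0 ≤ p) (hp1 : p ≤ 1) (hu0 : 0 ≤ u) (hu1 : u ≤ 1) :
    (1 - u) ^ p ≤ 1 - p * u := by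
  have h := Real.geom_mean_le_arith_mean2_weighted hp0 (by linarith : (0:ℝ) ≤ 1 - p)
    (by linarith : (0:ℝ) ≤ 1 - u) zero_le_one (by ring)
  rw [Real.one_rpow, mul_one] at h
  linarith

lemma rpow_gain (p m : ℝ) (hp0 : 0 ≤ p) (hp1 : p ≤ 1) (hm : 1 ≤ m) :
    p * m ^ (p - 1) ≤ m ^ p - (m - 1) ^ p := by
  have hm0 : (0:ℝ) < m := by linarith
  have h := bern p (1/m) hp0 hp1 (by positivity) (by rw [div_le_one hm0]; linarith)
  have key : (m - 1) ^ p = m ^ p * (1 - 1/m) ^ p := by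
    rw [← Real.mul_rpow (le_of_lt hm0) (by
      have : 1/m ≤ 1 := by rw [div_le_one hm0]; linarith
      linarith)]
    congr 1
    field_simp
  have hmp : (0:ℝ) < m ^ p := Real.rpow_pos_of_pos hm0 p
  have h2 : m ^ p * (1 - 1/m) ^ p ≤ m ^ p * (1 - p * (1/m)) := by
    exact mul_le_mul_of_nonneg_left h (le_of_lt hmp)
  have h3 : m ^ p * (1 - p * (1/m)) = m ^ p - p * (m ^ p / m) := by ring
  have h4 : m ^ p / m = m ^ (p - 1) := by
    rw [Real.rpow_sub hm0, Real.rpow_one]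
  rw [key]
  have h5 : m ^ p * (1 - 1 / m) ^ p ≤ m ^ p - p * m ^ (p-1) := by
    rw [← h4]; linarith
  linarith

lemma sum_rpow_inv_le (s : ℝ) (hs0 : 0 < s) (hs1 : s < 1) (N : ℕ) :
    ∑ m ∈ Finset.Icc 1 N, (m:ℝ) ^ (-s) ≤ (N:ℝ) ^ (1 - s) / (1 - s) := by
  induction N with
  | zero => simp [Real.zero_rpow (by linarith : (1:ℝ) - s ≠ 0)]
  | succ N ih =>
    rw [Finset.sum_Icc_succ_top (by omega : 1 ≤ N + 1)]
    have hgain := rpow_gain (1 - s) (N + 1 : ℝ) (by linarith) (by linarith)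
      (by push_cast; linarith [Nat.cast_nonneg (α := ℝ) N])
    have hcast : ((N + 1 : ℕ) : ℝ) = (N : ℝ) + 1 := by push_cast; ring
    have hexp : (1 - s) - 1 = -s := by ring
    rw [hexp] at hgain
    have hsimp : ((N:ℝ) + 1) - 1 = (N:ℝ) := by ring
    rw [hsimp] at hgain
    have h1s : (0:ℝ) < 1 - s := by linarith
    rw [hcast]
    have h5 : ((N:ℝ)+1) ^ (-s) ≤ (((N:ℝ)+1) ^ (1-s) - (N:ℝ) ^ (1-s))/(1-s) := by
      rw [le_div_iff₀ h1s]; nlinarith [hgain]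
    have heq : (N:ℝ)^(1-s)/(1-s) + (((N:ℝ)+1)^(1-s) - (N:ℝ)^(1-s))/(1-s)
        = ((N:ℝ)+1)^(1-s)/(1-s) := by ring
    linarith

lemma sum_inv_le_log (N : ℕ) : ∑ m ∈ Finset.Icc 1 N, 1/(m:ℝ) ≤ 1 + Real.log N := by
  induction N with
  | zero => simp
  | succ N ih =>
    rcases Nat.eq_zero_or_pos N with h0 | hpos
    · subst h0; simp
    rw [Finset.sum_Icc_succ_top (by omega : 1 ≤ N + 1)]
    have hN : (0:ℝ) < N := by exact_mod_cast hpos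
    have key : 1/((N:ℝ)+1) ≤ Real.log ((N:ℝ)+1) - Real.log N := by
      have h := Real.log_le_sub_one_of_pos (x := (N:ℝ)/((N:ℝ)+1)) (by positivity)
      rw [Real.log_div (by positivity) (by positivity)] at h
      have : (N:ℝ)/((N:ℝ)+1) - 1 = -(1/((N:ℝ)+1)) := by field_simp; ring
      linarith [this ▸ h]
    push_cast
    linarith

lemma sum_int_inv_le (V : Finset ℤ) (hV : ∀ v ∈ V, 1 ≤ v) :
    ∑ v ∈ V, (1:ℝ)/(v:ℝ) ≤ ∑ j ∈ Finset.Icc 1 V.card, 1/(j:ℝ) := by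
  induction' hn : V.card with c ih generalizing V
  · simp [Finset.card_eq_zero.mp hn]
  ·
    have hne : V.Nonempty := Finset.card_pos.mp (by omega)
    set M := V.max' hne with hM
    have hMmem : M ∈ V := V.max'_mem hne
    have hsub : V ⊆ Finset.Icc 1 M := fun v hv =>
      Finset.mem_Icc.mpr ⟨hV v hv, V.le_max' v hv⟩
    have hcard : V.card ≤ M.toNat := by
      have := Finset.card_le_card hsub
      rwa [Int.card_Icc, show M + 1 - 1 = M by ring] at this
    have hM1 : 1 ≤ M := hV M hMmem
    have hcc : ((c:ℤ)+1) ≤ M := by omega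
    have herase : (V.erase M).card = c := by
      rw [Finset.card_erase_of_mem hMmem]; omega
    have ih2 := ih (V.erase M) (fun v hv => hV v (Finset.mem_of_mem_erase hv)) herase
    rw [← Finset.add_sum_erase _ _ hMmem]
    rw [Finset.sum_Icc_succ_top (by omega : 1 ≤ c + 1), hn, herase] at *
    have hMinv : (1:ℝ)/(M:ℝ) ≤ 1/((c:ℝ)+1) := by
      apply one_div_le_one_div_of_le (by positivity)
      exact_mod_cast hcc
    push_cast
    push_cast at ih2
    linarith

lemma half_sum_dist_le (k : ℤ) (N : ℕ) :
    ∑ n ∈ Finset.Icc 1 N, (if (n:ℤ) < k then 2/((k:ℝ) - n) else 0)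
      ≤ 2 * ∑ j ∈ Finset.Icc 1 N, 1/(j:ℝ) := by
  rw [Finset.sum_ite, Finset.sum_const_zero, add_zero]
  set s₁ := Finset.filter (fun n : ℕ => (n:ℤ) < k) (Finset.Icc 1 N) with hs₁
  have himg := Finset.sum_image (f := fun v : ℤ => (2:ℝ)/(v:ℝ))
    (g := fun n : ℕ => k - (n:ℤ)) (s := s₁)
    (fun a _ b _ h => by simp only at h; omega)
  set V := s₁.image (fun n : ℕ => k - (n:ℤ)) with hV
  have hVpos : ∀ v ∈ V, 1 ≤ v := by
    intro v hv
    obtain ⟨n, hn, rfl⟩ := Finset.mem_image.mp hv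
    have := (Finset.mem_filter.mp hn).2
    omega
  have hVcard : V.card ≤ N := by
    have h1 : V.card ≤ s₁.card := Finset.card_image_le
    have h2 : s₁.card ≤ (Finset.Icc 1 N).card := Finset.card_filter_le _ _
    simpa [Nat.card_Icc] using h1.trans h2
  calc ∑ n ∈ s₁, 2/((k:ℝ) - n) = ∑ v ∈ V, 2/(v:ℝ) := by
        rw [himg]
        apply Finset.sum_congr rfl
        intro n _
        push_cast
        ring_nf
    _ = 2 * ∑ v ∈ V, 1/(v:ℝ) := by rw [Finset.mul_sum]; congr 1; ext v; ring
    _ ≤ 2 * ∑ j ∈ Finset.Icc 1 V.card, 1/(j:ℝ) := by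
        have := sum_int_inv_le V hVpos
        linarith
    _ ≤ 2 * ∑ j ∈ Finset.Icc 1 N, 1/(j:ℝ) := by
        apply mul_le_mul_of_nonneg_left _ (by norm_num)
        apply Finset.sum_le_sum_of_subset_of_nonneg
        · exact Finset.Icc_subset_Icc_right hVcard
        · intro j _ _; positivity

lemma half_sum_dist_le' (k : ℤ) (N : ℕ) :
    ∑ n ∈ Finset.Icc 1 N, (if k < (n:ℤ) then 2/((n:ℝ) - k) else 0)
      ≤ 2 * ∑ j ∈ Finset.Icc 1 N, 1/(j:ℝ) := by
  rw [Finset.sum_ite, Finset.sum_const_zero, add_zero]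
  set s₁ := Finset.filter (fun n : ℕ => k < (n:ℤ)) (Finset.Icc 1 N) with hs₁
  have himg := Finset.sum_image (f := fun v : ℤ => (2:ℝ)/(v:ℝ))
    (g := fun n : ℕ => (n:ℤ) - k) (s := s₁)
    (fun a _ b _ h => by simp only at h; omega)
  set V := s₁.image (fun n : ℕ => (n:ℤ) - k) with hV
  have hVpos : ∀ v ∈ V, 1 ≤ v := by
    intro v hv
    obtain ⟨n, hn, rfl⟩ := Finset.mem_image.mp hv
    have := (Finset.mem_filter.mp hn).2
    omega
  have hVcard : V.card ≤ N := by
    have h1 : V.card ≤ s₁.card := Finset.card_image_le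
    have h2 : s₁.card ≤ (Finset.Icc 1 N).card := Finset.card_filter_le _ _
    simpa [Nat.card_Icc] using h1.trans h2
  calc ∑ n ∈ s₁, 2/((n:ℝ) - k) = ∑ v ∈ V, 2/(v:ℝ) := by
        rw [himg]
        apply Finset.sum_congr rfl
        intro n _
        push_cast
        ring_nf
    _ = 2 * ∑ v ∈ V, 1/(v:ℝ) := by rw [Finset.mul_sum]; congr 1; ext v; ring
    _ ≤ 2 * ∑ j ∈ Finset.Icc 1 V.card, 1/(j:ℝ) := by
        have := sum_int_inv_le V hVpos
        linarith
    _ ≤ 2 * ∑ j ∈ Finset.Icc 1 N, 1/(j:ℝ) := by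
        apply mul_le_mul_of_nonneg_left _ (by norm_num)
        apply Finset.sum_le_sum_of_subset_of_nonneg
        · exact Finset.Icc_subset_Icc_right hVcard
        · intro j _ _; positivity

lemma sum_dist_le (θ : ℝ) (N : ℕ) :
    ∑ n ∈ Finset.Icc 1 N, (if 1 ≤ |θ - (n:ℝ)| then 1/|θ - (n:ℝ)| else 0)
      ≤ 4 * ∑ j ∈ Finset.Icc 1 N, 1/(j:ℝ) := by
  obtain ⟨k, hk⟩ : ∃ k : ℤ, k = round θ := ⟨_, rfl⟩
  have hround : |θ - (k:ℝ)| ≤ 1/2 := by rw [hk]; exact abs_sub_round θ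
  have hpt : ∀ n ∈ Finset.Icc 1 N,
      (if 1 ≤ |θ - (n:ℝ)| then 1/|θ - (n:ℝ)| else 0)
        ≤ (if (n:ℤ) < k then 2/((k:ℝ) - n) else 0)
          + (if k < (n:ℤ) then 2/((n:ℝ) - k) else 0) := by
    intro n _
    have habs := abs_le.mp hround
    rcases lt_trichotomy ((n:ℤ)) k with hlt | heq | hgt
    · have hkn : (1:ℝ) ≤ (k:ℝ) - n := by
        have h' : (n:ℤ) + 1 ≤ k := hlt
        have h'' : ((n:ℤ):ℝ) + 1 ≤ (k:ℝ) := by exact_mod_cast h'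
        push_cast at h''
        linarith
      have hθn : ((k:ℝ) - n)/2 ≤ θ - n := by linarith
      have hpos : (0:ℝ) < θ - n := by linarith
      rw [if_pos hlt, if_neg (show ¬ k < (n:ℤ) by omega), add_zero]
      split
      · rw [abs_of_pos hpos]
        rw [div_le_div_iff₀ hpos (by linarith)]
        linarith
      · positivity
    · have : |θ - (n:ℝ)| ≤ 1/2 := by
        have h' : (n:ℝ) = (k:ℝ) := by exact_mod_cast heq
        rw [h']
        exact hround
      rw [if_neg (show ¬ (1:ℝ) ≤ |θ - (n:ℝ)| by linarith), if_neg (show ¬ (n:ℤ) < k by omega), if_neg (show ¬ k < (n:ℤ) by omega)]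
      norm_num
    · have hkn : (1:ℝ) ≤ (n:ℝ) - k := by
        have h' : k + 1 ≤ (n:ℤ) := hgt
        have h'' : (k:ℝ) + 1 ≤ ((n:ℤ):ℝ) := by exact_mod_cast h'
        push_cast at h''
        linarith
      have hθn : ((n:ℝ) - k)/2 ≤ (n:ℝ) - θ := by linarith
      have hpos : (0:ℝ) < (n:ℝ) - θ := by linarith
      rw [if_neg (show ¬ (n:ℤ) < k by omega), if_pos hgt, zero_add]
      split
      · rw [abs_sub_comm, abs_of_pos hpos]
        rw [div_le_div_iff₀ hpos (by linarith)]
        linarith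
      · positivity
  calc ∑ n ∈ Finset.Icc 1 N, (if 1 ≤ |θ - (n:ℝ)| then 1/|θ - (n:ℝ)| else 0)
      ≤ ∑ n ∈ Finset.Icc 1 N, ((if (n:ℤ) < k then 2/((k:ℝ) - n) else 0)
          + (if k < (n:ℤ) then 2/((n:ℝ) - k) else 0)) := Finset.sum_le_sum hpt
    _ = ∑ n ∈ Finset.Icc 1 N, (if (n:ℤ) < k then 2/((k:ℝ) - n) else 0)
          + ∑ n ∈ Finset.Icc 1 N, (if k < (n:ℤ) then 2/((n:ℝ) - k) else 0) :=
        Finset.sum_add_distrib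
    _ ≤ 2 * ∑ j ∈ Finset.Icc 1 N, 1/(j:ℝ) + 2 * ∑ j ∈ Finset.Icc 1 N, 1/(j:ℝ) :=
        add_le_add (half_sum_dist_le k N) (half_sum_dist_le' k N)
    _ = 4 * ∑ j ∈ Finset.Icc 1 N, 1/(j:ℝ) := by ring

lemma near_count (θ : ℝ) (hθ : 0 ≤ θ) (N : ℕ) (c : ℝ) (hc : 0 ≤ c) :
    ∑ n ∈ Finset.Icc 1 N, (if |θ - (n:ℝ)| < 1 then c else 0) ≤ 2 * c := by
  rw [Finset.sum_ite, Finset.sum_const_zero, add_zero, Finset.sum_const]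
  have hsub : Finset.filter (fun n : ℕ => |θ - (n:ℝ)| < 1) (Finset.Icc 1 N)
      ⊆ Finset.Icc ⌊θ⌋₊ (⌊θ⌋₊ + 1) := by
    intro n hn
    obtain ⟨hn1, hn2⟩ := Finset.mem_filter.mp hn
    obtain ⟨ha, hb⟩ := abs_lt.mp hn2
    have hfl : (⌊θ⌋₊ : ℝ) ≤ θ := Nat.floor_le hθ
    have hfu : θ < (⌊θ⌋₊ : ℝ) + 1 := Nat.lt_floor_add_one θ
    have h1 : ⌊θ⌋₊ ≤ n := by
      have : (⌊θ⌋₊ : ℝ) < (n:ℝ) + 1 := by linarith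
      exact_mod_cast Nat.lt_add_one_iff.mp (by exact_mod_cast this)
    have h2 : n ≤ ⌊θ⌋₊ + 1 := by
      have h' : (n:ℝ) < ((⌊θ⌋₊ + 2 : ℕ) : ℝ) := by push_cast; linarith
      have : n < ⌊θ⌋₊ + 2 := by exact_mod_cast h'
      omega
    exact Finset.mem_Icc.mpr ⟨h1, h2⟩
  have hcard : (Finset.filter (fun n : ℕ => |θ - (n:ℝ)| < 1) (Finset.Icc 1 N)).card ≤ 2 := by
    have := Finset.card_le_card hsub
    rwa [Nat.card_Icc, show ⌊θ⌋₊ + 1 + 1 - ⌊θ⌋₊ = 2 by omega] at this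
  calc (Finset.filter (fun n : ℕ => |θ - (n:ℝ)| < 1) (Finset.Icc 1 N)).card • c
      ≤ (2 : ℕ) • c := smul_le_smul_of_nonneg_right (by exact_mod_cast hcard) hc
    _ = 2 * c := by simp [nsmul_eq_mul]

lemma log_lb (x : ℝ) (h1 : 1/2 < x) (h2 : x < 2) : |x - 1|/2 ≤ |Real.log x| := by
  rcases le_or_gt 1 x with h | h
  · rw [abs_of_nonneg (by linarith : (0:ℝ) ≤ x - 1),
      abs_of_nonneg (Real.log_nonneg h)]
    have hinv := Real.log_le_sub_one_of_pos (x := 1/x) (by positivity)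
    rw [one_div, Real.log_inv] at hinv
    have : -Real.log x ≤ 1/x - 1 := by rw [one_div]; exact hinv
    have hx0 : (0:ℝ) < x := by linarith
    have key : (x - 1)/x ≤ Real.log x := by
      have : 1 - 1/x ≤ Real.log x := by linarith
      have heq : (x-1)/x = 1 - 1/x := by field_simp
      linarith
    have : (x-1)/2 ≤ (x-1)/x := by
      rw [div_le_div_iff₀ (by norm_num) hx0]
      nlinarith
    linarith
  · rw [abs_of_neg (by linarith : x - 1 < 0),
      abs_of_neg (Real.log_neg (by linarith) h)]
    have := Real.log_le_sub_one_of_pos (by linarith : (0:ℝ) < x)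
    linarith

lemma range_of_log_lt (x : ℝ) (hx : 0 < x) (h : |Real.log x| < Real.log 2) :
    1/2 < x ∧ x < 2 := by
  obtain ⟨ha, hb⟩ := abs_lt.mp h
  constructor
  · have : Real.log (1/2) < Real.log x := by
      rw [one_div, Real.log_inv]; linarith
    exact (Real.log_lt_log_iff (by norm_num) hx).mp this
  · exact (Real.log_lt_log_iff hx (by norm_num)).mp hb

lemma sum_rpow_inv_le_filter (s : ℝ) (hs0 : 0 < s) (hs1 : s < 1) (N : ℕ) (M : ℝ)
    (hM : 0 ≤ M) :
    ∑ m ∈ Finset.Icc 1 N, (if (m:ℝ) ≤ M then (m:ℝ) ^ (-s) else 0)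
      ≤ M ^ (1 - s) / (1 - s) := by
  have h1 : ∑ m ∈ Finset.Icc 1 N, (if (m:ℝ) ≤ M then (m:ℝ) ^ (-s) else 0)
      ≤ ∑ m ∈ Finset.Icc 1 ⌊M⌋₊, (m:ℝ) ^ (-s) := by
    rw [Finset.sum_ite, Finset.sum_const_zero, add_zero]
    apply Finset.sum_le_sum_of_subset_of_nonneg
    · intro m hm
      obtain ⟨hm1, hm2⟩ := Finset.mem_filter.mp hm
      exact Finset.mem_Icc.mpr ⟨(Finset.mem_Icc.mp hm1).1, Nat.le_floor hm2⟩
    · intro m _ _; positivity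
  have h2 := sum_rpow_inv_le s hs0 hs1 ⌊M⌋₊
  have h3 : ((⌊M⌋₊ : ℝ)) ^ (1-s) ≤ M ^ (1-s) :=
    Real.rpow_le_rpow (by positivity) (Nat.floor_le hM) (by linarith)
  have h4 : ((⌊M⌋₊:ℝ)) ^ (1-s)/(1-s) ≤ M ^ (1-s)/(1-s) := by
    apply div_le_div_of_nonneg_right h3 (by linarith) |>.trans_eq rfl
  linarith

lemma pointwise_bound (α T d d' : ℝ) (hα1 : 1/2 < α) (hα2 : α < 1) (hT : 2 ≤ T)
    (hd' : 0 < d') (hdd : d' ≤ d) (m n : ℕ) (hm : 1 ≤ m) (hn : 1 ≤ n) :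
    (if 1 / (2 * T ^ (1 - α)) < |Real.log ((m * d) / (n * d'))| then
        1 / ((m : ℝ) ^ α * (n : ℝ) ^ α * |Real.log ((m * d) / (n * d'))|) else 0)
    ≤ (1/Real.log 2) * ((m:ℝ)^(-α) * (n:ℝ)^(-α))
      + (if |(m:ℝ)*(d/d') - n| < 1 then 4 * T^(1-α) * (m:ℝ)^(-(2*α)) else 0)
      + (if (1 ≤ |(m:ℝ)*(d/d') - n| ∧ (n:ℝ) < 2*((m:ℝ)*(d/d')) ∧ (m:ℝ)*(d/d') < 2*n)
          then 4 * (d/d')^(1-α) * (m:ℝ)^(1-2*α) / |(m:ℝ)*(d/d') - n| else 0) := by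
  have hm0 : (0:ℝ) < m := by exact_mod_cast hm
  have hn0 : (0:ℝ) < n := by exact_mod_cast hn
  have hm1 : (1:ℝ) ≤ m := by exact_mod_cast hm
  have hn1 : (1:ℝ) ≤ n := by exact_mod_cast hn
  have hδ0 : (0:ℝ) < d/d' := div_pos (by linarith) hd'
  have hδ1 : (1:ℝ) ≤ d/d' := (one_le_div hd').mpr hdd
  have hT0 : (0:ℝ) < T := by linarith
  have hTA : (0:ℝ) < T^(1-α) := Real.rpow_pos_of_pos hT0 _
  have hε : (0:ℝ) < 1/(2*T^(1-α)) := by positivity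
  have hlog2 : (0:ℝ) < Real.log 2 := Real.log_pos (by norm_num)
  set δ := d/d' with hδ
  have hxeq : ((m:ℝ) * d) / ((n:ℝ) * d') = ((m:ℝ)*δ)/(n:ℝ) := by
    rw [hδ, mul_comm (n:ℝ) d', ← div_div, mul_div_assoc]
  set x := ((m:ℝ) * d) / ((n:ℝ) * d') with hx
  have hx0 : 0 < x := by
    rw [hx]
    have : (0:ℝ) < d := by linarith
    positivity
  have hP1 : (0:ℝ) ≤ (1/Real.log 2) * ((m:ℝ)^(-α) * (n:ℝ)^(-α)) :=
    mul_nonneg (one_div_nonneg.mpr hlog2.le) (by positivity)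
  have hP2 : (0:ℝ) ≤ (if |(m:ℝ)*δ - n| < 1 then 4 * T^(1-α) * (m:ℝ)^(-(2*α)) else 0) := by
    split
    · positivity
    · exact le_refl 0
  have hP3 : (0:ℝ) ≤ (if (1 ≤ |(m:ℝ)*δ - n| ∧ (n:ℝ) < 2*((m:ℝ)*δ) ∧ (m:ℝ)*δ < 2*n)
      then 4 * δ^(1-α) * (m:ℝ)^(1-2*α) / |(m:ℝ)*δ - n| else 0) := by
    split
    · apply div_nonneg (by positivity) (abs_nonneg _)
    · exact le_refl 0
  by_cases hc0 : 1 / (2 * T ^ (1 - α)) < |Real.log x|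
  swap
  · rw [if_neg hc0]; linarith
  rw [if_pos hc0]
  set L := |Real.log x| with hLdef
  have hL0 : 0 < L := lt_trans hε hc0
  have hma : (0:ℝ) < (m:ℝ)^α := Real.rpow_pos_of_pos hm0 _
  have hna : (0:ℝ) < (n:ℝ)^α := Real.rpow_pos_of_pos hn0 _
  have hmna : (0:ℝ) < (m:ℝ)^(-α) := Real.rpow_pos_of_pos hm0 _
  have hnna : (0:ℝ) < (n:ℝ)^(-α) := Real.rpow_pos_of_pos hn0 _
  have hteq : 1/((m:ℝ)^α * (n:ℝ)^α * L) = (m:ℝ)^(-α) * (n:ℝ)^(-α) * (1/L) := by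
    rw [Real.rpow_neg hm0.le, Real.rpow_neg hn0.le]
    field_simp
  by_cases hfar : Real.log 2 ≤ L
  · have h1 : 1/((m:ℝ)^α * (n:ℝ)^α * L) ≤ (1/Real.log 2) * ((m:ℝ)^(-α) * (n:ℝ)^(-α)) := by
      have heq : (1/Real.log 2) * ((m:ℝ)^(-α) * (n:ℝ)^(-α))
          = 1/((m:ℝ)^α * (n:ℝ)^α * Real.log 2) := by
        rw [Real.rpow_neg hm0.le, Real.rpow_neg hn0.le]
        field_simp
      rw [heq]
      apply one_div_le_one_div_of_le (by positivity)
      exact mul_le_mul_of_nonneg_left hfar (le_of_lt (mul_pos hma hna))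
    linarith
  push_neg at hfar
  obtain ⟨hx1, hx2⟩ := range_of_log_lt x hx0 hfar
  have hxd : x = ((m:ℝ)*δ)/(n:ℝ) := hxeq
  have hn2mδ : (n:ℝ) < 2*((m:ℝ)*δ) := by
    have h' := hx1
    rw [hxd, lt_div_iff₀ hn0] at h'
    linarith
  have hmδ2n : (m:ℝ)*δ < 2*(n:ℝ) := by
    have h' := hx2
    rw [hxd, div_lt_iff₀ hn0] at h'
    linarith
  have hinvL : 1/L < 2*T^(1-α) := by
    have := one_div_lt_one_div_of_lt hε hc0
    rwa [one_div_one_div] at this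
  rw [hteq]
  by_cases hnear : |(m:ℝ)*δ - n| < 1
  · have hmn : (m:ℝ)/2 < n := by
      have : (m:ℝ) ≤ (m:ℝ)*δ := le_mul_of_one_le_right hm0.le hδ1
      linarith
    have hs1 : (n:ℝ)^(-α) ≤ 2 * (m:ℝ)^(-α) := by
      have h1 : ((m:ℝ)/2)^α ≤ (n:ℝ)^α :=
        Real.rpow_le_rpow (by positivity) hmn.le (by linarith)
      have h4 : (n:ℝ)^(-α) ≤ ((m:ℝ)/2)^(-α) := by
        rw [Real.rpow_neg (by positivity : (0:ℝ) ≤ (m:ℝ)/2), Real.rpow_neg hn0.le]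
        exact inv_anti₀ (by positivity) h1
      have h5 : ((m:ℝ)/2)^(-α) = (2:ℝ)^α * (m:ℝ)^(-α) := by
        rw [Real.rpow_neg (by positivity : (0:ℝ) ≤ (m:ℝ)/2),
          Real.div_rpow hm0.le (by norm_num : (0:ℝ) ≤ 2), inv_div,
          Real.rpow_neg hm0.le, div_eq_mul_inv]
      have h3 : ((2:ℝ))^α ≤ 2 := by
        calc (2:ℝ)^α ≤ (2:ℝ)^(1:ℝ) :=
              Real.rpow_le_rpow_of_exponent_le one_le_two (by linarith)
        _ = 2 := Real.rpow_one 2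
      calc (n:ℝ)^(-α) ≤ (2:ℝ)^α * (m:ℝ)^(-α) := h5 ▸ h4
        _ ≤ 2 * (m:ℝ)^(-α) := mul_le_mul_of_nonneg_right h3 hmna.le
    have hmm : (m:ℝ)^(-α) * (m:ℝ)^(-α) = (m:ℝ)^(-(2*α)) := by
      rw [← Real.rpow_add hm0]
      congr 1
      ring
    have hkey : (m:ℝ)^(-α) * (n:ℝ)^(-α) * (1/L) ≤ 4 * T^(1-α) * (m:ℝ)^(-(2*α)) := by
      calc (m:ℝ)^(-α) * (n:ℝ)^(-α) * (1/L)
          ≤ (m:ℝ)^(-α) * (2*(m:ℝ)^(-α)) * (2*T^(1-α)) := by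
            apply mul_le_mul (mul_le_mul_of_nonneg_left hs1 hmna.le) hinvL.le
              (by positivity) (by positivity)
        _ = 4*T^(1-α) * ((m:ℝ)^(-α) * (m:ℝ)^(-α)) := by ring
        _ = 4*T^(1-α) * (m:ℝ)^(-(2*α)) := by rw [hmm]
    rw [if_pos hnear]
    linarith
  · push_neg at hnear
    have hD0 : (0:ℝ) < |(m:ℝ)*δ - n| := by linarith
    have habs : |x - 1| = |(m:ℝ)*δ - n|/(n:ℝ) := by
      rw [hxd, div_sub_one hn0.ne', abs_div, abs_of_pos hn0]
    have habs0 : (0:ℝ) < |x - 1| := by rw [habs]; positivity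
    have hlb := log_lb x hx1 hx2
    have hinvL2 : 1/L ≤ 2*(n:ℝ)/|(m:ℝ)*δ - n| := by
      have h1 : 1/L ≤ 1/(|x-1|/2) := one_div_le_one_div_of_le (by positivity) hlb
      rw [one_div_div] at h1
      calc 1/L ≤ 2/|x-1| := h1
        _ = 2/(|(m:ℝ)*δ - n|/(n:ℝ)) := by rw [habs]
        _ = 2*(n:ℝ)/|(m:ℝ)*δ - n| := by rw [div_div_eq_mul_div]
    have hn1a : (n:ℝ)^(-α) * (n:ℝ) = (n:ℝ)^(1-α) := by
      nth_rewrite 2 [← Real.rpow_one (n:ℝ)]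
      rw [← Real.rpow_add hn0]
      congr 1
      ring
    have hmm2 : (m:ℝ)^(-α) * (m:ℝ)^(1-α) = (m:ℝ)^(1-2*α) := by
      rw [← Real.rpow_add hm0]
      congr 1
      ring
    have hstep : (n:ℝ)^(1-α) ≤ 2 * ((m:ℝ)^(1-α) * δ^(1-α)) := by
      have h1 : (n:ℝ)^(1-α) ≤ (2*((m:ℝ)*δ))^(1-α) :=
        Real.rpow_le_rpow hn0.le hn2mδ.le (by linarith)
      have h2 : (2*((m:ℝ)*δ))^(1-α) = (2:ℝ)^(1-α) * ((m:ℝ)^(1-α) * δ^(1-α)) := by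
        rw [Real.mul_rpow (by norm_num) (by positivity), Real.mul_rpow hm0.le hδ0.le]
      have h3 : ((2:ℝ))^(1-α) ≤ 2 := by
        calc (2:ℝ)^(1-α) ≤ (2:ℝ)^(1:ℝ) :=
              Real.rpow_le_rpow_of_exponent_le one_le_two (by linarith)
          _ = 2 := Real.rpow_one 2
      calc (n:ℝ)^(1-α) ≤ (2:ℝ)^(1-α) * ((m:ℝ)^(1-α) * δ^(1-α)) := h2 ▸ h1
        _ ≤ 2 * ((m:ℝ)^(1-α) * δ^(1-α)) := by
            apply mul_le_mul_of_nonneg_right h3 (by positivity)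
    have hkey : (m:ℝ)^(-α) * (n:ℝ)^(-α) * (1/L)
        ≤ 4 * δ^(1-α) * (m:ℝ)^(1-2*α) / |(m:ℝ)*δ - n| :=
      calc (m:ℝ)^(-α) * (n:ℝ)^(-α) * (1/L)
          ≤ (m:ℝ)^(-α) * (n:ℝ)^(-α) * (2*(n:ℝ)/|(m:ℝ)*δ - n|) := by
            apply mul_le_mul_of_nonneg_left hinvL2 (by positivity)
        _ = 2 * ((m:ℝ)^(-α) * ((n:ℝ)^(-α) * (n:ℝ))) / |(m:ℝ)*δ - n| := by ring
        _ = 2 * ((m:ℝ)^(-α) * (n:ℝ)^(1-α)) / |(m:ℝ)*δ - n| := by rw [hn1a]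
        _ ≤ 2 * ((m:ℝ)^(-α) * (2 * ((m:ℝ)^(1-α) * δ^(1-α)))) / |(m:ℝ)*δ - n| := by
            gcongr
        _ = 4 * δ^(1-α) * ((m:ℝ)^(-α) * (m:ℝ)^(1-α)) / |(m:ℝ)*δ - n| := by ring
        _ = 4 * δ^(1-α) * (m:ℝ)^(1-2*α) / |(m:ℝ)*δ - n| := by rw [hmm2]
    rw [if_pos (show (1 ≤ |(m:ℝ)*δ - n| ∧ (n:ℝ) < 2*((m:ℝ)*δ) ∧ (m:ℝ)*δ < 2*(n:ℝ))
      from ⟨hnear, hn2mδ, hmδ2n⟩)]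
    linarith

set_option maxHeartbeats 1000000 in
theorem stmt_11 (α : ℝ) (hα : α ∈ Set.Ioo (1/2 : ℝ) 1) :
    ∃ C : ℝ, 0 < C ∧ ∀ T : ℝ, 2 ≤ T → ∀ d d' : ℝ, 0 < d' → d' ≤ d →
      ∑ m ∈ Finset.Icc 1 ⌊T⌋₊, ∑ n ∈ Finset.Icc 1 ⌊T⌋₊,
          (if 1 / (2 * T ^ (1 - α)) < |Real.log ((m * d) / (n * d'))| then
            1 / ((m : ℝ) ^ α * (n : ℝ) ^ α * |Real.log ((m * d) / (n * d'))|)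
          else 0)
        ≤ C * T ^ (2 - 2 * α) * Real.log T := by
  obtain ⟨hα1, hα2⟩ := hα
  have hA0 : (0:ℝ) < 1 - α := by linarith
  refine ⟨4/(1-α)^2 + 24 + 48/(1-α) + 1, by positivity, ?_⟩
  intro T hT d d' hd' hdd
  set N := ⌊T⌋₊ with hN
  have hT0 : (0:ℝ) < T := by linarith
  have hT1 : (1:ℝ) ≤ T := by linarith
  have hNT : (N:ℝ) ≤ T := Nat.floor_le hT0.le
  have hN1 : 1 ≤ N := by
    rw [hN]
    exact Nat.le_floor (by exact_mod_cast hT1)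
  have hN0 : (0:ℝ) < N := by exact_mod_cast hN1
  have hδ1 : (1:ℝ) ≤ d/d' := (one_le_div hd').mpr hdd
  have hδ0 : (0:ℝ) < d/d' := by linarith
  have hlog2 : (0:ℝ) < Real.log 2 := Real.log_pos (by norm_num)
  have hlog2num : (0.6931471803:ℝ) < Real.log 2 := Real.log_two_gt_d9
  have hlogT2 : Real.log 2 ≤ Real.log T := Real.log_le_log (by norm_num) hT
  have hlogT0 : (0:ℝ) < Real.log T := lt_of_lt_of_le hlog2 hlogT2
  have hlogT1 : (1:ℝ) ≤ 2 * Real.log T := by linarith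
  have hT2A : (0:ℝ) < T^(2-2*α) := Real.rpow_pos_of_pos hT0 _
  have hTA : (0:ℝ) < T^(1-α) := Real.rpow_pos_of_pos hT0 _
  have hTAle : T^(1-α) ≤ T^(2-2*α) :=
    Real.rpow_le_rpow_of_exponent_le hT1 (by linarith)
  have hTAmul : T^(1-α) * T^(1-α) = T^(2-2*α) := by
    rw [← Real.rpow_add hT0]
    congr 1
    ring
  -- step 1: pointwise bound
  have hstep1 : ∑ m ∈ Finset.Icc 1 N, ∑ n ∈ Finset.Icc 1 N,
      (if 1 / (2 * T ^ (1 - α)) < |Real.log ((m * d) / (n * d'))| then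
        1 / ((m : ℝ) ^ α * (n : ℝ) ^ α * |Real.log ((m * d) / (n * d'))|) else 0)
      ≤ ∑ m ∈ Finset.Icc 1 N, ∑ n ∈ Finset.Icc 1 N,
        ((1/Real.log 2) * ((m:ℝ)^(-α) * (n:ℝ)^(-α))
        + (if |(m:ℝ)*(d/d') - n| < 1 then 4 * T^(1-α) * (m:ℝ)^(-(2*α)) else 0)
        + (if (1 ≤ |(m:ℝ)*(d/d') - n| ∧ (n:ℝ) < 2*((m:ℝ)*(d/d')) ∧ (m:ℝ)*(d/d') < 2*n)
            then 4 * (d/d')^(1-α) * (m:ℝ)^(1-2*α) / |(m:ℝ)*(d/d') - n| else 0)) := by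
    apply Finset.sum_le_sum
    intro m hm
    apply Finset.sum_le_sum
    intro n hn
    exact pointwise_bound α T d d' hα1 hα2 hT hd' hdd m n
      (Finset.mem_Icc.mp hm).1 (Finset.mem_Icc.mp hn).1
  have hsplit : ∑ m ∈ Finset.Icc 1 N, ∑ n ∈ Finset.Icc 1 N,
        ((1/Real.log 2) * ((m:ℝ)^(-α) * (n:ℝ)^(-α))
        + (if |(m:ℝ)*(d/d') - n| < 1 then 4 * T^(1-α) * (m:ℝ)^(-(2*α)) else 0)
        + (if (1 ≤ |(m:ℝ)*(d/d') - n| ∧ (n:ℝ) < 2*((m:ℝ)*(d/d')) ∧ (m:ℝ)*(d/d') < 2*n)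
            then 4 * (d/d')^(1-α) * (m:ℝ)^(1-2*α) / |(m:ℝ)*(d/d') - n| else 0))
      = (∑ m ∈ Finset.Icc 1 N, ∑ n ∈ Finset.Icc 1 N,
          (1/Real.log 2) * ((m:ℝ)^(-α) * (n:ℝ)^(-α)))
        + (∑ m ∈ Finset.Icc 1 N, ∑ n ∈ Finset.Icc 1 N,
          (if |(m:ℝ)*(d/d') - n| < 1 then 4 * T^(1-α) * (m:ℝ)^(-(2*α)) else 0))
        + (∑ m ∈ Finset.Icc 1 N, ∑ n ∈ Finset.Icc 1 N,
          (if (1 ≤ |(m:ℝ)*(d/d') - n| ∧ (n:ℝ) < 2*((m:ℝ)*(d/d')) ∧ (m:ℝ)*(d/d') < 2*n)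
            then 4 * (d/d')^(1-α) * (m:ℝ)^(1-2*α) / |(m:ℝ)*(d/d') - n| else 0)) := by
    simp only [Finset.sum_add_distrib]
  -- harmonic sum
  have hH0 : (0:ℝ) ≤ ∑ j ∈ Finset.Icc 1 N, 1/(j:ℝ) :=
    Finset.sum_nonneg (fun j _ => by positivity)
  have hH : ∑ j ∈ Finset.Icc 1 N, 1/(j:ℝ) ≤ 1 + Real.log T := by
    have h1 := sum_inv_le_log N
    have h2 : Real.log N ≤ Real.log T := Real.log_le_log hN0 hNT
    linarith
  -- bound 1
  have hB1 : (∑ m ∈ Finset.Icc 1 N, ∑ n ∈ Finset.Icc 1 N,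
      (1/Real.log 2) * ((m:ℝ)^(-α) * (n:ℝ)^(-α)))
      ≤ (4/(1-α)^2) * (T^(2-2*α) * Real.log T) := by
    set P := ∑ m ∈ Finset.Icc 1 N, (m:ℝ)^(-α) with hPdef
    have hPpos : (0:ℝ) ≤ P := Finset.sum_nonneg (fun m _ => by positivity)
    have hP : P ≤ T^(1-α)/(1-α) := by
      have h1 := sum_rpow_inv_le α (by linarith) hα2 N
      have h2 : (N:ℝ)^(1-α) ≤ T^(1-α) := Real.rpow_le_rpow hN0.le hNT hA0.le
      have h3 : (N:ℝ)^(1-α)/(1-α) ≤ T^(1-α)/(1-α) :=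
        div_le_div_of_nonneg_right h2 hA0.le |>.trans_eq rfl
      linarith
    have heq : (∑ m ∈ Finset.Icc 1 N, ∑ n ∈ Finset.Icc 1 N,
        (1/Real.log 2) * ((m:ℝ)^(-α) * (n:ℝ)^(-α))) = (1/Real.log 2) * (P * P) := by
      rw [hPdef, Finset.sum_mul_sum, Finset.mul_sum]
      exact Finset.sum_congr rfl fun m _ => by rw [Finset.mul_sum]
    rw [heq]
    have e2 : (T^(1-α)/(1-α)) * (T^(1-α)/(1-α)) = T^(2-2*α)/(1-α)^2 := by
      rw [div_mul_div_comm, hTAmul]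
      congr 1
      ring
    have h12 : 1/Real.log 2 ≤ 2 := by
      rw [div_le_iff₀ hlog2]
      linarith
    calc (1/Real.log 2) * (P * P)
        ≤ (1/Real.log 2) * ((T^(1-α)/(1-α)) * (T^(1-α)/(1-α))) := by
          apply mul_le_mul_of_nonneg_left
            (mul_le_mul hP hP hPpos (by positivity)) (one_div_nonneg.mpr hlog2.le)
      _ = (1/Real.log 2) * (T^(2-2*α)/(1-α)^2) := by rw [e2]
      _ ≤ 2 * (T^(2-2*α)/(1-α)^2) := by
          apply mul_le_mul_of_nonneg_right h12 (by positivity)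
      _ ≤ (4/(1-α)^2) * (T^(2-2*α) * Real.log T) := by
          rw [show 2 * (T^(2-2*α)/(1-α)^2) = (2*T^(2-2*α))/(1-α)^2 by ring,
            show (4/(1-α)^2) * (T^(2-2*α) * Real.log T)
              = (4*(T^(2-2*α) * Real.log T))/(1-α)^2 by ring]
          apply div_le_div_of_nonneg_right ?_ (by positivity) |>.trans_eq rfl
          nlinarith [hT2A, hlogT1]
  -- bound 2
  have hB2 : (∑ m ∈ Finset.Icc 1 N, ∑ n ∈ Finset.Icc 1 N,
      (if |(m:ℝ)*(d/d') - n| < 1 then 4 * T^(1-α) * (m:ℝ)^(-(2*α)) else 0))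
      ≤ 24 * (T^(2-2*α) * Real.log T) := by
    have hstep : ∀ m ∈ Finset.Icc 1 N,
        (∑ n ∈ Finset.Icc 1 N,
          (if |(m:ℝ)*(d/d') - n| < 1 then 4 * T^(1-α) * (m:ℝ)^(-(2*α)) else 0))
        ≤ 8*T^(1-α)*(1/(m:ℝ)) := by
      intro m hm
      have hm1 : (1:ℝ) ≤ m := by exact_mod_cast (Finset.mem_Icc.mp hm).1
      have hm0 : (0:ℝ) < m := by linarith
      have h1 := near_count ((m:ℝ)*(d/d')) (by positivity) N
        (4 * T^(1-α) * (m:ℝ)^(-(2*α))) (by positivity)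
      have h2 : (m:ℝ)^(-(2*α)) ≤ 1/(m:ℝ) := by
        have := Real.rpow_le_rpow_of_exponent_le hm1
          (show -(2*α) ≤ (-1:ℝ) by linarith)
        rwa [Real.rpow_neg_one, ← one_div] at this
      calc (∑ n ∈ Finset.Icc 1 N,
          (if |(m:ℝ)*(d/d') - n| < 1 then 4 * T^(1-α) * (m:ℝ)^(-(2*α)) else 0))
          ≤ 2 * (4 * T^(1-α) * (m:ℝ)^(-(2*α))) := h1
        _ = 8 * T^(1-α) * (m:ℝ)^(-(2*α)) := by ring
        _ ≤ 8*T^(1-α)*(1/(m:ℝ)) := by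
            apply mul_le_mul_of_nonneg_left h2 (by positivity)
    calc (∑ m ∈ Finset.Icc 1 N, ∑ n ∈ Finset.Icc 1 N,
        (if |(m:ℝ)*(d/d') - n| < 1 then 4 * T^(1-α) * (m:ℝ)^(-(2*α)) else 0))
        ≤ ∑ m ∈ Finset.Icc 1 N, 8*T^(1-α)*(1/(m:ℝ)) := Finset.sum_le_sum hstep
      _ = 8*T^(1-α) * ∑ m ∈ Finset.Icc 1 N, 1/(m:ℝ) := by
          rw [Finset.mul_sum]
      _ ≤ 8*T^(1-α) * (1 + Real.log T) := by
          apply mul_le_mul_of_nonneg_left hH (by positivity)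
      _ ≤ 24 * (T^(2-2*α) * Real.log T) := by
          have f1 : T^(1-α) * (1 + Real.log T) ≤ T^(2-2*α) * (1 + Real.log T) :=
            mul_le_mul_of_nonneg_right hTAle (by linarith)
          have f2 : T^(2-2*α) * (1 + Real.log T) ≤ T^(2-2*α) * (3*Real.log T) :=
            mul_le_mul_of_nonneg_left (by linarith) hT2A.le
          linarith [f1, f2]
  -- bound 3
  have hB3 : (∑ m ∈ Finset.Icc 1 N, ∑ n ∈ Finset.Icc 1 N,
      (if (1 ≤ |(m:ℝ)*(d/d') - n| ∧ (n:ℝ) < 2*((m:ℝ)*(d/d')) ∧ (m:ℝ)*(d/d') < 2*n)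
        then 4 * (d/d')^(1-α) * (m:ℝ)^(1-2*α) / |(m:ℝ)*(d/d') - n| else 0))
      ≤ (48/(1-α)) * (T^(2-2*α) * Real.log T) := by
    set H := ∑ j ∈ Finset.Icc 1 N, 1/(j:ℝ) with hHdef
    set K := 16*(d/d')^(1-α)*H with hKdef
    have hK0 : (0:ℝ) ≤ K := by
      rw [hKdef]
      positivity
    have hinner : ∀ m ∈ Finset.Icc 1 N,
        (∑ n ∈ Finset.Icc 1 N,
          (if (1 ≤ |(m:ℝ)*(d/d') - n| ∧ (n:ℝ) < 2*((m:ℝ)*(d/d')) ∧ (m:ℝ)*(d/d') < 2*n)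
            then 4 * (d/d')^(1-α) * (m:ℝ)^(1-2*α) / |(m:ℝ)*(d/d') - n| else 0))
        ≤ (if (m:ℝ) ≤ 2*T/(d/d') then (m:ℝ)^(-(2*α-1)) else 0) * K := by
      intro m hm
      have hm1 : (1:ℝ) ≤ m := by exact_mod_cast (Finset.mem_Icc.mp hm).1
      have hm0 : (0:ℝ) < m := by linarith
      by_cases hcase : (m:ℝ) ≤ 2*T/(d/d')
      · rw [if_pos hcase]
        have hc0 : (0:ℝ) ≤ 4 * (d/d')^(1-α) * (m:ℝ)^(1-2*α) := by positivity
        have hpt : ∀ n ∈ Finset.Icc 1 N,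
            (if (1 ≤ |(m:ℝ)*(d/d') - n| ∧ (n:ℝ) < 2*((m:ℝ)*(d/d')) ∧ (m:ℝ)*(d/d') < 2*n)
              then 4 * (d/d')^(1-α) * (m:ℝ)^(1-2*α) / |(m:ℝ)*(d/d') - n| else 0)
            ≤ (4 * (d/d')^(1-α) * (m:ℝ)^(1-2*α)) *
              (if 1 ≤ |(m:ℝ)*(d/d') - n| then 1/|(m:ℝ)*(d/d') - n| else 0) := by
          intro n _
          by_cases htr : (1 ≤ |(m:ℝ)*(d/d') - n| ∧ (n:ℝ) < 2*((m:ℝ)*(d/d'))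
              ∧ (m:ℝ)*(d/d') < 2*n)
          · rw [if_pos htr, if_pos htr.1, mul_one_div]
          · rw [if_neg htr]
            apply mul_nonneg hc0
            split
            · positivity
            · exact le_refl 0
        calc (∑ n ∈ Finset.Icc 1 N,
            (if (1 ≤ |(m:ℝ)*(d/d') - n| ∧ (n:ℝ) < 2*((m:ℝ)*(d/d')) ∧ (m:ℝ)*(d/d') < 2*n)
              then 4 * (d/d')^(1-α) * (m:ℝ)^(1-2*α) / |(m:ℝ)*(d/d') - n| else 0))
            ≤ ∑ n ∈ Finset.Icc 1 N, (4 * (d/d')^(1-α) * (m:ℝ)^(1-2*α)) *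
              (if 1 ≤ |(m:ℝ)*(d/d') - n| then 1/|(m:ℝ)*(d/d') - n| else 0) :=
              Finset.sum_le_sum hpt
          _ = (4 * (d/d')^(1-α) * (m:ℝ)^(1-2*α)) * ∑ n ∈ Finset.Icc 1 N,
              (if 1 ≤ |(m:ℝ)*(d/d') - n| then 1/|(m:ℝ)*(d/d') - n| else 0) := by
              rw [Finset.mul_sum]
          _ ≤ (4 * (d/d')^(1-α) * (m:ℝ)^(1-2*α)) * (4*H) := by
              apply mul_le_mul_of_nonneg_left (sum_dist_le ((m:ℝ)*(d/d')) N) hc0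
          _ = (m:ℝ)^(-(2*α-1)) * K := by
              rw [hKdef, show (m:ℝ)^(-(2*α-1)) = (m:ℝ)^(1-2*α) by congr 1; ring]
              ring
      · rw [if_neg hcase, zero_mul]
        apply le_of_eq
        apply Finset.sum_eq_zero
        intro n hn
        rw [if_neg]
        rintro ⟨_, _, h3⟩
        apply hcase
        rw [le_div_iff₀ hδ0]
        have hnN : (n:ℝ) ≤ N := by exact_mod_cast (Finset.mem_Icc.mp hn).2
        linarith
    have hfilter := sum_rpow_inv_le_filter (2*α-1) (by linarith) (by linarith) N
      (2*T/(d/d')) (by positivity)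
    have h1s : (1:ℝ) - (2*α-1) = 2-2*α := by ring
    rw [h1s] at hfilter
    have hGQ : (d/d')^(1-α) * (2*T/(d/d'))^(2-2*α) ≤ 2*T^(2-2*α) := by
      have e1 : (2*T/(d/d'))^(2-2*α) = (2:ℝ)^(2-2*α)*T^(2-2*α)/(d/d')^(2-2*α) := by
        rw [Real.div_rpow (by positivity) hδ0.le, Real.mul_rpow (by norm_num) hT0.le]
      have e2 : (d/d')^(1-α)/(d/d')^(2-2*α) = (d/d')^(α-1) := by
        rw [← Real.rpow_sub hδ0]
        congr 1
        ring
      have e3 : (d/d')^(α-1) ≤ 1 := Real.rpow_le_one_of_one_le_of_nonpos hδ1 (by linarith)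
      have e4 : (2:ℝ)^(2-2*α) ≤ 2 := by
        calc (2:ℝ)^(2-2*α) ≤ (2:ℝ)^(1:ℝ) :=
              Real.rpow_le_rpow_of_exponent_le one_le_two (by linarith)
          _ = 2 := Real.rpow_one 2
      have e5 : (0:ℝ) ≤ (2:ℝ)^(2-2*α) := by positivity
      calc (d/d')^(1-α) * (2*T/(d/d'))^(2-2*α)
          = (2:ℝ)^(2-2*α)*T^(2-2*α)*((d/d')^(1-α)/(d/d')^(2-2*α)) := by rw [e1]; ring
        _ = (2:ℝ)^(2-2*α)*T^(2-2*α)*(d/d')^(α-1) := by rw [e2]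
        _ ≤ 2*T^(2-2*α)*1 := by
            apply mul_le_mul (mul_le_mul e4 le_rfl hT2A.le (by norm_num)) e3
              (by positivity) (by positivity)
        _ = 2*T^(2-2*α) := mul_one _
    have hQ0 : (0:ℝ) ≤ (2*T/(d/d'))^(2-2*α) := by positivity
    calc (∑ m ∈ Finset.Icc 1 N, ∑ n ∈ Finset.Icc 1 N,
        (if (1 ≤ |(m:ℝ)*(d/d') - n| ∧ (n:ℝ) < 2*((m:ℝ)*(d/d')) ∧ (m:ℝ)*(d/d') < 2*n)
          then 4 * (d/d')^(1-α) * (m:ℝ)^(1-2*α) / |(m:ℝ)*(d/d') - n| else 0))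
        ≤ ∑ m ∈ Finset.Icc 1 N,
          (if (m:ℝ) ≤ 2*T/(d/d') then (m:ℝ)^(-(2*α-1)) else 0) * K :=
          Finset.sum_le_sum hinner
      _ = (∑ m ∈ Finset.Icc 1 N,
          (if (m:ℝ) ≤ 2*T/(d/d') then (m:ℝ)^(-(2*α-1)) else 0)) * K := by
          rw [Finset.sum_mul]
      _ ≤ ((2*T/(d/d'))^(2-2*α)/(2-2*α)) * K := by
          apply mul_le_mul_of_nonneg_right hfilter hK0
      _ = (16/(2-2*α)) * (((d/d')^(1-α) * (2*T/(d/d'))^(2-2*α)) * H) := by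
          rw [hKdef]
          ring
      _ ≤ (16/(2-2*α)) * ((2*T^(2-2*α)) * (3*Real.log T)) := by
          apply mul_le_mul_of_nonneg_left ?_
            (le_of_lt (div_pos (by norm_num) (by linarith : (0:ℝ) < 2-2*α)))
          apply mul_le_mul hGQ (by linarith) hH0 (by positivity)
      _ = (48/(1-α)) * (T^(2-2*α) * Real.log T) := by
          rw [show (2:ℝ)-2*α = 2*(1-α) by ring]
          field_simp
          ring
  have hfin : (0:ℝ) < T^(2-2*α) * Real.log T := mul_pos hT2A hlogT0
  calc ∑ m ∈ Finset.Icc 1 N, ∑ n ∈ Finset.Icc 1 N,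
      (if 1 / (2 * T ^ (1 - α)) < |Real.log ((m * d) / (n * d'))| then
        1 / ((m : ℝ) ^ α * (n : ℝ) ^ α * |Real.log ((m * d) / (n * d'))|) else 0)
      ≤ _ := hstep1
    _ = _ := hsplit
    _ ≤ (4/(1-α)^2) * (T^(2-2*α) * Real.log T) + 24 * (T^(2-2*α) * Real.log T)
        + (48/(1-α)) * (T^(2-2*α) * Real.log T) := by
        exact add_le_add (add_le_add hB1 hB2) hB3
    _ = (4/(1-α)^2 + 24 + 48/(1-α)) * (T^(2-2*α) * Real.log T) := by ring
    _ ≤ (4/(1-α)^2 + 24 + 48/(1-α) + 1) * (T^(2-2*α) * Real.log T) := by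
        apply mul_le_mul_of_nonneg_right (by linarith) hfin.le
    _ = (4/(1-α)^2 + 24 + 48/(1-α) + 1) * T^(2-2*α) * Real.log T := by ring
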